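/- Let l < m be integers and define Q_{l,m}(x,y) = P^{l,m}(x,y) − P_{l,m}(x,y), where P_{l,m}(x,y) = 𝟙_{2^l ≤ δ(x,y) < 2^m} P(x,y). Then |Q_{l,m}(x,y)| ≤ 2√2 (2^{-l} 𝟙_{δ(x,y) < 2^l} + 2^{-m} 𝟙_{δ(x,y) < 2^m}) for all x ≠ y. -/

import Mathlib

open MeasureTheory Set

/-- The standard dyadic interval `[k·2^{-j}, (k+1)·2^{-j})` contained in `[0,∞)`. -/
def dyadicI (j : ℤ) (k : ℕ) : Set ℝ :=
  Set.Ico ((k : ℝ) * (2:ℝ) ^ (-j)) (((k : ℝ) + 1) * (2:ℝ) ^ (-j))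

/-- The dyadic ultrametric on `[0,∞)`: the infimum of the lengths of the
dyadic intervals containing both points. -/
noncomputable def delta (x y : ℝ) : ℝ :=
  if x = y then 0
  else sInf {L : ℝ | ∃ j : ℤ, ∃ k : ℕ, L = (2:ℝ) ^ (-j) ∧ x ∈ dyadicI j k ∧ y ∈ dyadicI j k}

/-- The Haar function of the dyadic interval `dyadicI j k`. -/
noncomputable def haar (j : ℤ) (k : ℕ) (t : ℝ) : ℝ :=
  Real.sqrt ((2:ℝ) ^ j) *
    ((dyadicI (j+1) (2*k)).indicator (fun _ => (1:ℝ)) t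
      - (dyadicI (j+1) (2*k+1)).indicator (fun _ => (1:ℝ)) t)

/-- Petermichl's kernel on `[0,∞)`. -/
noncomputable def Pker (x y : ℝ) : ℝ :=
  ∑' p : ℤ × ℕ,
    haar p.1 p.2 y * (haar (p.1+1) (2*p.2) x - haar (p.1+1) (2*p.2+1) x)

/-- The elementary building block `Ω_J` associated with the dyadic interval `J = dyadicI j k`. -/
noncomputable def Omega (j : ℤ) (k : ℕ) (x y : ℝ) : ℝ :=
  ((dyadicI (j+1) (2*k)).indicator (fun _ => (1:ℝ)) y
    - (dyadicI (j+1) (2*k+1)).indicator (fun _ => (1:ℝ)) y) *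
  (((dyadicI (j+2) (4*k+1)).indicator (fun _ => (1:ℝ)) x
      + (dyadicI (j+2) (4*k+2)).indicator (fun _ => (1:ℝ)) x)
    - ((dyadicI (j+2) (4*k)).indicator (fun _ => (1:ℝ)) x
      + (dyadicI (j+2) (4*k+3)).indicator (fun _ => (1:ℝ)) x))

/-- The scale truncation `P^{l,m}` of Petermichl's kernel: only the dyadic
intervals with `2^l ≤ |I| < 2^m` are kept. -/
noncomputable def PkerScale (l m : ℤ) (x y : ℝ) : ℝ :=
  ∑' p : ℤ × ℕ,
    if (2:ℝ) ^ l ≤ (2:ℝ) ^ (-p.1) ∧ (2:ℝ) ^ (-p.1) < (2:ℝ) ^ m then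
      haar p.1 p.2 y * (haar (p.1+1) (2*p.2) x - haar (p.1+1) (2*p.2+1) x)
    else 0

/-- The metric truncation `P_{l,m}` of Petermichl's kernel. -/
noncomputable def PkerMetric (l m : ℤ) (x y : ℝ) : ℝ :=
  if (2:ℝ) ^ l ≤ delta x y ∧ delta x y < (2:ℝ) ^ m then Pker x y else 0

/-!
Each summand of `P` at the dyadic interval `I` has modulus at most `√2 |I|⁻¹` and vanishes unless
both `x` and `y` lie in `I`; in particular `δ(x, y) ≤ |I|` for the nonvanishing summands.
Since `x` lies in exactly one dyadic interval of each length, any subfamily of summands whose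
intervals all have length `≥ 2^J` is dominated by the geometric series
`√2 ∑ₙ 2^{-J-n} = 2√2 · 2^{-J}`.
If `δ < 2^l`, the metric truncation vanishes and `P^{l,m}` is such a subfamily with `J = l`.
If `2^l ≤ δ < 2^m`, every nonvanishing summand already has `|I| ≥ 2^l`, so `P^{l,m} - P_{l,m}` is
minus the subfamily `|I| ≥ 2^m`. If `δ ≥ 2^m`, both truncations vanish.
-/

lemma mem_dyadicI {j : ℤ} {k : ℕ} {t : ℝ} :
    t ∈ dyadicI j k ↔ (k : ℝ) ≤ t * 2 ^ j ∧ t * 2 ^ j < k + 1 := by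
  have hp : (0 : ℝ) < 2 ^ j := by positivity
  simp only [dyadicI, mem_Ico, zpow_neg, ← div_eq_mul_inv]
  rw [div_le_iff₀ hp, lt_div_iff₀ hp]

lemma eq_floor_of_mem_dyadicI {j : ℤ} {k : ℕ} {t : ℝ} (h : t ∈ dyadicI j k) :
    k = ⌊t * 2 ^ j⌋₊ := by
  rw [mem_dyadicI] at h
  exact ((Nat.floor_eq_iff ((Nat.cast_nonneg k).trans h.1)).2 h).symm

lemma dyadicI_child_subset {j : ℤ} {k c : ℕ} (hc : c = 2 * k ∨ c = 2 * k + 1) :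
    dyadicI (j + 1) c ⊆ dyadicI j k := by
  intro t ht
  rw [mem_dyadicI] at ht ⊢
  rw [zpow_add_one₀ two_ne_zero, ← mul_assoc] at ht
  rcases hc with rfl | rfl <;> push_cast at ht <;> constructor <;> linarith [ht.1, ht.2]

lemma haar_eq_zero {j : ℤ} {k : ℕ} {t : ℝ} (h : t ∉ dyadicI j k) : haar j k t = 0 := by
  have h₀ : t ∉ dyadicI (j + 1) (2 * k) := fun ht => h (dyadicI_child_subset (Or.inl rfl) ht)
  have h₁ : t ∉ dyadicI (j + 1) (2 * k + 1) := fun ht => h (dyadicI_child_subset (Or.inr rfl) ht)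
  rw [haar, indicator_of_notMem h₀, indicator_of_notMem h₁, sub_zero, mul_zero]

lemma abs_haar_le (j : ℤ) (k : ℕ) (t : ℝ) : |haar j k t| ≤ √(2 ^ j) := by
  rw [haar, abs_mul, abs_of_nonneg (Real.sqrt_nonneg _)]
  refine mul_le_of_le_one_right (Real.sqrt_nonneg _) ?_
  classical
  rw [indicator_apply, indicator_apply]
  split_ifs <;> norm_num

lemma abs_haar_sub_haar_le (j : ℤ) (k : ℕ) (t : ℝ) :
    |haar (j + 1) (2 * k) t - haar (j + 1) (2 * k + 1) t| ≤ √(2 ^ (j + 1)) := by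
  by_cases h : t ∈ dyadicI (j + 1) (2 * k)
  · have h' : t ∉ dyadicI (j + 1) (2 * k + 1) := fun h' => by
      have := (eq_floor_of_mem_dyadicI h).trans (eq_floor_of_mem_dyadicI h').symm
      omega
    rw [haar_eq_zero h', sub_zero]
    exact abs_haar_le _ _ _
  · rw [haar_eq_zero h, zero_sub, abs_neg]
    exact abs_haar_le _ _ _

noncomputable def petermichlTerm (x y : ℝ) (p : ℤ × ℕ) : ℝ :=
  haar p.1 p.2 y * (haar (p.1 + 1) (2 * p.2) x - haar (p.1 + 1) (2 * p.2 + 1) x)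

lemma abs_petermichlTerm_le (x y : ℝ) (p : ℤ × ℕ) :
    |petermichlTerm x y p| ≤ √2 * 2 ^ p.1 := by
  have hsqrt : √((2 : ℝ) ^ p.1) * √(2 ^ (p.1 + 1)) = √2 * 2 ^ p.1 := by
    rw [← Real.sqrt_mul (by positivity), zpow_add_one₀ two_ne_zero,
      show (2 : ℝ) ^ p.1 * (2 ^ p.1 * 2) = 2 * (2 ^ p.1) ^ 2 by ring,
      Real.sqrt_mul zero_le_two, Real.sqrt_sq (by positivity)]
  rw [petermichlTerm, abs_mul, ← hsqrt]
  exact mul_le_mul (abs_haar_le _ _ _) (abs_haar_sub_haar_le _ _ _) (abs_nonneg _)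
    (Real.sqrt_nonneg _)

lemma mem_dyadicI_of_petermichlTerm_ne_zero {x y : ℝ} {p : ℤ × ℕ}
    (h : petermichlTerm x y p ≠ 0) : x ∈ dyadicI p.1 p.2 ∧ y ∈ dyadicI p.1 p.2 := by
  constructor
  · by_contra hx
    have h₀ : x ∉ dyadicI (p.1 + 1) (2 * p.2) := fun h' => hx (dyadicI_child_subset (Or.inl rfl) h')
    have h₁ : x ∉ dyadicI (p.1 + 1) (2 * p.2 + 1) := fun h' =>
      hx (dyadicI_child_subset (Or.inr rfl) h')
    exact h (by rw [petermichlTerm, haar_eq_zero h₀, haar_eq_zero h₁, sub_zero, mul_zero])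
  · by_contra hy
    exact h (by rw [petermichlTerm, haar_eq_zero hy, zero_mul])

lemma delta_le_of_mem_dyadicI {x y : ℝ} {j : ℤ} {k : ℕ} (hx : x ∈ dyadicI j k)
    (hy : y ∈ dyadicI j k) : delta x y ≤ 2 ^ (-j) := by
  rw [delta]
  split_ifs
  · positivity
  · refine csInf_le ⟨0, ?_⟩ ⟨j, k, rfl, hx, hy⟩
    rintro L ⟨j', k', rfl, -, -⟩
    positivity

lemma le_neg_of_petermichlTerm_ne_zero {x y : ℝ} {J : ℤ} (hJ : (2 : ℝ) ^ J ≤ delta x y)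
    {p : ℤ × ℕ} (h : petermichlTerm x y p ≠ 0) : J ≤ -p.1 := by
  obtain ⟨hx, hy⟩ := mem_dyadicI_of_petermichlTerm_ne_zero h
  exact (zpow_le_zpow_iff_right₀ one_lt_two).1 (hJ.trans (delta_le_of_mem_dyadicI hx hy))

lemma summable_and_abs_tsum_le_of_dyadic_support {x C : ℝ} {J : ℤ} {f : ℤ × ℕ → ℝ}
    (hsupp : ∀ p, f p ≠ 0 → x ∈ dyadicI p.1 p.2 ∧ J ≤ -p.1)
    (hbound : ∀ p, |f p| ≤ C * 2 ^ p.1) :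
    Summable f ∧ |∑' p, f p| ≤ 2 * C * 2 ^ (-J) := by
  -- `e n` indexes the dyadic interval of length `2^(J + n)` containing `x`.
  set e : ℕ → ℤ × ℕ := fun n => (-J - n, ⌊x * 2 ^ (-J - n)⌋₊)
  have he : Function.Injective e := fun a b hab => by
    have : -J - (a : ℤ) = -J - b := congrArg Prod.fst hab
    omega
  have hrange : Function.support f ⊆ range e := by
    rintro ⟨j, k⟩ hp
    obtain ⟨hx, hj⟩ := hsupp _ hp
    have hn : -J - ((-J - j).toNat : ℤ) = j := by omega
    exact ⟨(-J - j).toNat, by simp only [e, hn, ← eq_floor_of_mem_dyadicI hx]⟩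
  have hmajor : ∀ n, ‖f (e n)‖ ≤ C * 2 ^ (-J) * (1 / 2) ^ n := fun n => by
    rw [Real.norm_eq_abs, one_div, inv_pow, ← zpow_natCast, ← zpow_neg, mul_assoc,
      ← zpow_add₀ two_ne_zero, ← sub_eq_add_neg]
    exact hbound (e n)
  have hgeom := hasSum_geometric_two.mul_left (C * 2 ^ (-J))
  have hsum : Summable (f ∘ e) := Summable.of_norm_bounded hgeom.summable hmajor
  refine ⟨(he.summable_iff fun p hp => Function.notMem_support.1 (mt (@hrange p) hp)).1 hsum, ?_⟩
  rw [← he.tsum_eq hrange, ← Real.norm_eq_abs]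
  calc ‖∑' n, f (e n)‖ ≤ C * 2 ^ (-J) * 2 := tsum_of_norm_bounded hgeom hmajor
    _ = 2 * C * 2 ^ (-J) := by ring

lemma summable_and_abs_tsum_indicator_petermichlTerm_le (x y : ℝ) (J : ℤ) (s : Set (ℤ × ℕ))
    (hs : ∀ p ∈ s, petermichlTerm x y p ≠ 0 → J ≤ -p.1) :
    Summable (s.indicator (petermichlTerm x y)) ∧
      |∑' p, s.indicator (petermichlTerm x y) p| ≤ 2 * √2 * 2 ^ (-J) := by
  refine summable_and_abs_tsum_le_of_dyadic_support (x := x) (fun p hp => ?_) fun p =>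
    (norm_indicator_le_norm_self (petermichlTerm x y) p).trans (abs_petermichlTerm_le x y p)
  obtain ⟨hps, hp⟩ := indicator_apply_ne_zero.1 hp
  exact ⟨(mem_dyadicI_of_petermichlTerm_ne_zero hp).1, hs p hps hp⟩

def scaleBand (l m : ℤ) : Set (ℤ × ℕ) := {p | l ≤ -p.1 ∧ -p.1 < m}

lemma PkerScale_eq_tsum_indicator (l m : ℤ) (x y : ℝ) :
    PkerScale l m x y = ∑' p, (scaleBand l m).indicator (petermichlTerm x y) p := by
  refine tsum_congr fun p => ?_
  simp only [indicator_apply, scaleBand, mem_ofPred_eq, petermichlTerm,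
    zpow_le_zpow_iff_right₀ (one_lt_two : (1 : ℝ) < 2),
    zpow_lt_zpow_iff_right₀ (one_lt_two : (1 : ℝ) < 2)]

lemma abs_PkerScale_le (l m : ℤ) (x y : ℝ) : |PkerScale l m x y| ≤ 2 * √2 * 2 ^ (-l) := by
  rw [PkerScale_eq_tsum_indicator]
  exact (summable_and_abs_tsum_indicator_petermichlTerm_le x y l _ fun p hp _ => hp.1).2

lemma abs_Pker_sub_PkerScale_le {l m : ℤ} {x y : ℝ} (hl : (2 : ℝ) ^ l ≤ delta x y) :
    |Pker x y - PkerScale l m x y| ≤ 2 * √2 * 2 ^ (-m) := by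
  set S := scaleBand l m
  obtain ⟨hSsum, -⟩ := summable_and_abs_tsum_indicator_petermichlTerm_le x y l S
    fun p _ hp => le_neg_of_petermichlTerm_ne_zero hl hp
  obtain ⟨hScsum, hSc⟩ := summable_and_abs_tsum_indicator_petermichlTerm_le x y m Sᶜ
    fun p hp hp₀ => not_lt.1 fun h => hp ⟨le_neg_of_petermichlTerm_ne_zero hl hp₀, h⟩
  have hsplit : Pker x y = PkerScale l m x y + ∑' p, Sᶜ.indicator (petermichlTerm x y) p := by
    rw [PkerScale_eq_tsum_indicator, ← hSsum.tsum_add hScsum]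
    simp only [indicator_self_add_compl_apply]
    rfl
  rwa [hsplit, add_sub_cancel_left]

lemma PkerScale_eq_zero_of_le_delta {l m : ℤ} {x y : ℝ} (hm : (2 : ℝ) ^ m ≤ delta x y) :
    PkerScale l m x y = 0 := by
  rw [PkerScale_eq_tsum_indicator]
  refine (tsum_congr fun p => indicator_apply_eq_zero.2 fun hp => ?_).trans tsum_zero
  by_contra hp₀
  exact hp.2.not_ge (le_neg_of_petermichlTerm_ne_zero hm hp₀)

theorem Q_pointwise_bound_general (l m : ℤ) (hlm : l < m) (x y : ℝ) :
    |PkerScale l m x y - PkerMetric l m x y| ≤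
      2 * Real.sqrt 2 *
        ((if delta x y < (2:ℝ) ^ l then (2:ℝ) ^ (-l) else 0) +
          (if delta x y < (2:ℝ) ^ m then (2:ℝ) ^ (-m) else 0)) := by
  rcases lt_or_ge (delta x y) (2 ^ l) with hl | hl
  · have hm : delta x y < 2 ^ m := hl.trans (zpow_lt_zpow_right₀ one_lt_two hlm)
    rw [PkerMetric, if_neg fun h => h.1.not_gt hl, sub_zero, if_pos hl, if_pos hm, mul_add]
    have : 0 ≤ 2 * √2 * (2 : ℝ) ^ (-m) := by positivity
    linarith [abs_PkerScale_le l m x y]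
  rcases lt_or_ge (delta x y) (2 ^ m) with hm | hm
  · rw [PkerMetric, if_pos ⟨hl, hm⟩, if_neg hl.not_gt, if_pos hm, zero_add, abs_sub_comm]
    exact abs_Pker_sub_PkerScale_le hl
  · rw [PkerMetric, if_neg fun h => h.2.not_ge hm, PkerScale_eq_zero_of_le_delta hm,
      if_neg hl.not_gt, if_neg hm.not_gt]
    simp

/-- Pointwise bound for `Q_{l,m} = P^{l,m} − P_{l,m}`:
`|Q_{l,m}(x,y)| ≤ 2√2 (2^{-l} 𝟙_{δ(x,y)<2^l} + 2^{-m} 𝟙_{δ(x,y)<2^m})`. -/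
theorem Q_pointwise_bound (l m : ℤ) (hlm : l < m) (x y : ℝ) (hx : 0 ≤ x) (hy : 0 ≤ y)
    (hxy : x ≠ y) :
    |PkerScale l m x y - PkerMetric l m x y| ≤
      2 * Real.sqrt 2 *
        ((if delta x y < (2:ℝ) ^ l then (2:ℝ) ^ (-l) else 0) +
          (if delta x y < (2:ℝ) ^ m then (2:ℝ) ^ (-m) else 0)) :=
  Q_pointwise_bound_general l m hlm x y
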